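/- arXiv:0706.4394 — 4 statements merged into one kernel-verified Lean document; each statement's English description precedes it below -/
import Mathlib

section
/- Let m ≥ 2 be an integer and ε > 0. Among all vectors (λ₁,...,λ_m) with λ₁ ≤ λ₂ ≤ ... ≤ λ_m, all λᵢ > 0, satisfying Σ λᵢ⁻¹ ≤ m and Σ λᵢ ≤ m + ε, the minimal possible value of λ₁ is λ₁* = 1 + ε/2 − √(ε(4 + ε − 4/m))/2. -/
open BigOperators
set_option maxHeartbeats 1000000 in
/-- Among vectors λ₁ ≤ ... ≤ λ_m of positive reals with ∑λᵢ⁻¹ ≤ m and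
∑λᵢ ≤ m+ε, the minimal possible λ₁ is 1 + ε/2 − √(ε(4+ε−4/m))/2. -/

theorem min_lambda_one
    (m : ℕ) (hm : 2 ≤ m) (ε : ℝ) (hε : 0 < ε) :
    IsLeast {t : ℝ | ∃ lam : Fin m → ℝ, Monotone lam ∧ (∀ i, 0 < lam i) ∧
        (∑ i, (lam i)⁻¹) ≤ m ∧ (∑ i, lam i) ≤ m + ε ∧ t = lam ⟨0, by omega⟩}
      (1 + ε / 2 - Real.sqrt (ε * (4 + ε - 4 / m)) / 2) := by
  have hmr2 : (2:ℝ) ≤ (m:ℝ) := by exact_mod_cast hm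
  have hmr0 : (0:ℝ) < (m:ℝ) := by linarith
  have hmr1 : (0:ℝ) < (m:ℝ) - 1 := by linarith
  set s := Real.sqrt (ε * (4 + ε - 4 / m)) with hsdef
  have harg : 0 ≤ ε * (4 + ε - 4 / (m:ℝ)) := by
    have : 4 / (m:ℝ) ≤ 2 := by
      rw [div_le_iff₀ hmr0]; linarith
    nlinarith
  have hs2 : s ^ 2 = ε * (4 + ε - 4 / (m:ℝ)) := Real.sq_sqrt harg
  have hs0 : 0 ≤ s := Real.sqrt_nonneg _
  have hs2' : (m:ℝ) * s ^ 2 = (m:ℝ) * (4 + ε) * ε - 4 * ε := by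
    rw [hs2]; field_simp
  set t := 1 + ε / 2 - s / 2 with htdef
  have hq : (m:ℝ) * t ^ 2 - (m:ℝ) * (2 + ε) * t + ((m:ℝ) + ε) = 0 := by
    rw [htdef]; linear_combination hs2' / 4
  have hsε : ε < s := by
    have h1 : ε ^ 2 < s ^ 2 := by nlinarith [hs2', mul_pos hε hmr1]
    exact lt_of_pow_lt_pow_left₀ 2 hs0 h1
  have ht1 : t < 1 := by rw [htdef]; linarith
  have ht0 : 0 < t := by
    have h1 : s ^ 2 < (2 + ε) ^ 2 := by nlinarith [hs2']
    have h2 : s < 2 + ε := lt_of_pow_lt_pow_left₀ 2 (by linarith) h1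
    rw [htdef]; linarith
  set L := ((m:ℝ) + ε - t) / ((m:ℝ) - 1) with hLdef
  have hL1 : 1 < L := by
    rw [hLdef, lt_div_iff₀ hmr1]; linarith
  have hL0 : 0 < L := by linarith
  have htL : t ≤ L := by linarith
  clear_value s t L
  have hcard : (Finset.univ.erase (⟨0, by omega⟩ : Fin m)).card = m - 1 := by
    rw [Finset.card_erase_of_mem (Finset.mem_univ _)]; simp
  have hcast : ((m - 1 : ℕ) : ℝ) = (m:ℝ) - 1 := by
    push_cast [Nat.cast_sub (by omega : 1 ≤ m)]; ring
  constructor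
  · -- membership
    refine ⟨fun i => if i.val = 0 then t else L, ?_, ?_, ?_, ?_, ?_⟩
    · intro i j hij
      by_cases hi : i.val = 0
      · by_cases hj : j.val = 0 <;> simp [hi, hj] <;> linarith
      · have hj : j.val ≠ 0 := by
          have : i.val ≤ j.val := hij
          omega
        simp [hi, hj]
    · intro i; by_cases hi : i.val = 0 <;> simp [hi] <;> linarith
    · have key : ∑ i : Fin m, ((if i.val = 0 then t else L))⁻¹
          = t⁻¹ + ((m:ℝ) - 1) * L⁻¹ := by
        rw [← Finset.add_sum_erase _ _ (Finset.mem_univ (⟨0, by omega⟩ : Fin m))]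
        have herase : ∑ i ∈ Finset.univ.erase (⟨0, by omega⟩ : Fin m),
            ((if i.val = 0 then t else L))⁻¹ = ((m:ℝ) - 1) * L⁻¹ := by
          rw [Finset.sum_congr rfl (fun i hi => ?_), Finset.sum_const, hcard,
            nsmul_eq_mul, hcast]
          have hne : i ≠ (⟨0, by omega⟩ : Fin m) := (Finset.mem_erase.mp hi).1
          have : i.val ≠ 0 := fun h => hne (Fin.ext h)
          simp [this]
        rw [herase]; simp
      rw [key]
      have h1 : (0:ℝ) < (m:ℝ) + ε - t := by linarith
      have heq : t⁻¹ + ((m:ℝ) - 1) * L⁻¹ = (m:ℝ) := by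
        rw [hLdef]
        rw [inv_div]
        field_simp
        nlinarith [hq]
      rw [heq]
    · have key : ∑ i : Fin m, (if i.val = 0 then t else L)
          = t + ((m:ℝ) - 1) * L := by
        rw [← Finset.add_sum_erase _ _ (Finset.mem_univ (⟨0, by omega⟩ : Fin m))]
        have herase : ∑ i ∈ Finset.univ.erase (⟨0, by omega⟩ : Fin m),
            (if i.val = 0 then t else L) = ((m:ℝ) - 1) * L := by
          rw [Finset.sum_congr rfl (fun i hi => ?_), Finset.sum_const, hcard,
            nsmul_eq_mul, hcast]
          have hne : i ≠ (⟨0, by omega⟩ : Fin m) := (Finset.mem_erase.mp hi).1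
          have : i.val ≠ 0 := fun h => hne (Fin.ext h)
          simp [this]
        rw [herase]; simp
      rw [key, hLdef, mul_div_cancel₀ _ (ne_of_gt hmr1)]
      linarith
    · simp
  · -- lower bound
    rintro x ⟨lam, hmono, hpos, hinv, hsum, rfl⟩
    set a := lam ⟨0, by omega⟩ with ha
    by_cases ha1 : 1 ≤ a
    · linarith
    push_neg at ha1
    have ha0 : 0 < a := hpos _
    set S := ∑ i ∈ Finset.univ.erase (⟨0, by omega⟩ : Fin m), lam i with hSdef
    set T := ∑ i ∈ Finset.univ.erase (⟨0, by omega⟩ : Fin m), (lam i)⁻¹ with hTdef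
    have hsplit1 : ∑ i : Fin m, lam i = a + S :=
      (Finset.add_sum_erase _ _ (Finset.mem_univ _)).symm
    have hsplit2 : ∑ i : Fin m, (lam i)⁻¹ = a⁻¹ + T :=
      (Finset.add_sum_erase _ _ (Finset.mem_univ _)).symm
    have hne : (Finset.univ.erase (⟨0, by omega⟩ : Fin m)).Nonempty := by
      rw [← Finset.card_pos, hcard]; omega
    have hS0 : 0 < S := Finset.sum_pos (fun i _ => hpos i) hne
    have hT0 : 0 < T := Finset.sum_pos (fun i _ => inv_pos.mpr (hpos i)) hne
    have hcs : ((m:ℝ) - 1) ^ 2 ≤ S * T := by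
      have h := Finset.sum_sq_le_sum_mul_sum_of_sq_eq_mul
        (Finset.univ.erase (⟨0, by omega⟩ : Fin m))
        (r := fun _ => (1:ℝ)) (f := fun i => lam i) (g := fun i => (lam i)⁻¹)
        (fun i _ => (hpos i).le) (fun i _ => (inv_pos.mpr (hpos i)).le)
        (fun i _ => by rw [mul_inv_cancel₀ (ne_of_gt (hpos i))]; norm_num)
      rw [Finset.sum_const, hcard, nsmul_eq_mul, mul_one, hcast] at h
      exact h
    have hTle : T ≤ (m:ℝ) - a⁻¹ := by rw [hsplit2] at hinv; linarith
    have hSle : S ≤ (m:ℝ) + ε - a := by rw [hsplit1] at hsum; linarith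
    clear_value a S T
    have hma : 0 < (m:ℝ) - a⁻¹ := by linarith
    have hkey : ((m:ℝ) - 1) ^ 2 ≤ ((m:ℝ) + ε - a) * ((m:ℝ) - a⁻¹) :=
      hcs.trans ((mul_le_mul_of_nonneg_left hTle hS0.le).trans
        (mul_le_mul_of_nonneg_right hSle hma.le))
    have h2 : ((m:ℝ) + ε - a) * ((m:ℝ) - a⁻¹) * a
        = ((m:ℝ) + ε - a) * ((m:ℝ) * a - 1) := by
      field_simp
    have hkey' : ((m:ℝ) - 1) ^ 2 * a ≤ ((m:ℝ) + ε - a) * ((m:ℝ) * a - 1) := by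
      rw [← h2]
      exact mul_le_mul_of_nonneg_right hkey ha0.le
    have hqa : (m:ℝ) * a ^ 2 - (m:ℝ) * (2 + ε) * a + ((m:ℝ) + ε) ≤ 0 := by
      nlinarith [hkey']
    by_contra hcon
    push_neg at hcon
    have hpos2 : 0 < 2 + ε - a - t := by linarith
    nlinarith [hq, hqa, mul_pos (mul_pos hmr0 (sub_pos.mpr hcon)) hpos2]
end

section
/- For any design ξ with nonsingular information matrix M, setting ε = max_{x∈X} xᵀM⁻¹x − m, any support point x* of a D-optimum design ξ* on X satisfies d(ξ,x*) = x*ᵀM⁻¹x* ≥ h_m(ε) := m[1 + ε/2 − √(ε(4 + ε − 4/m))/2]. -/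
/-!
Write `M`, `M*` for the information matrices of `ξ` and of the D-optimum design `ξ*`, and let
`μᵢ` be the eigenvalues of the positive definite matrix `K = M*^{1/2} M⁻¹ M*^{1/2}`, which is
similar to `M⁻¹ M*`. Averaging the variance functions gives
`∑ μᵢ = tr (M⁻¹ M*) = ∑ ξ*(x) d(ξ, x) ≤ m + ε` and `∑ μᵢ⁻¹ = tr (M*⁻¹ M) = ∑ ξ(x) d(ξ*, x) ≤ m`,
the latter by the equivalence theorem `d(ξ*, x) ≤ m`, which holds because the perturbed design
`(ξ* + s δₓ) / (1 + s)` has determinant `det M* (1 + s d(ξ*, x)) / (1 + s)ᵐ ≤ det M*` for all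
`s > 0`. Cauchy–Schwarz applied to the other `m - 1` eigenvalues turns the two trace constraints
into a quadratic inequality for each `μᵢ`, whose smaller root is `λ₁* = h_m(ε) / m`. Finally
`x* = M*^{1/2} y` with `|y|² = d(ξ*, x*) = m` and `d(ξ, x*) = yᵀ K y ≥ λ₁* |y|²`.
-/
open Matrix BigOperators Finset

/-- Information matrix M(ξ) = ∑ w(x) x xᵀ of a finitely supported design. -/
noncomputable def infoM (m : ℕ) (S : Finset (Fin m → ℝ)) (w : (Fin m → ℝ) → ℝ) :
    Matrix (Fin m) (Fin m) ℝ := ∑ x ∈ S, w x • vecMulVec x x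

/-- A design: a probability weight function on the finite design space S. -/
def IsDesign (m : ℕ) (S : Finset (Fin m → ℝ)) (w : (Fin m → ℝ) → ℝ) : Prop :=
  (∀ x, 0 ≤ w x) ∧ ∑ x ∈ S, w x = 1

/-- Variance function d(ξ,x) = xᵀ M(ξ)⁻¹ x. -/
noncomputable def dvar (m : ℕ) (S : Finset (Fin m → ℝ)) (w : (Fin m → ℝ) → ℝ)
    (x : Fin m → ℝ) : ℝ := x ⬝ᵥ (infoM m S w)⁻¹ *ᵥ x

/-- D-optimality: w maximizes det M over all designs on S. -/
def IsDOptimal (m : ℕ) (S : Finset (Fin m → ℝ)) (w : (Fin m → ℝ) → ℝ) : Prop :=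
  IsDesign m S w ∧ ∀ v, IsDesign m S v → (infoM m S v).det ≤ (infoM m S w).det

/-- The paper's `λ₁* = h_m(ε) / m`: the smaller root of `m λ² - m (ε + 2) λ + m + ε`. -/
noncomputable def minEigenvalueBound (n : ℕ) (ε : ℝ) : ℝ :=
  1 + ε / 2 - √(ε * (4 + ε - 4 / n)) / 2

theorem minEigenvalueBound_le {n : ℕ} (hn : 0 < n) {ε t : ℝ}
    (h : n * t ^ 2 - n * (ε + 2) * t + (n + ε) ≤ 0) : minEigenvalueBound n ε ≤ t := by
  have hn' : (0 : ℝ) < n := by exact_mod_cast hn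
  have hsq : (2 * t - (ε + 2)) ^ 2 ≤ ε * (4 + ε - 4 / n) := by
    have : ε * (4 + ε - 4 / n) - (2 * t - (ε + 2)) ^ 2
        = -4 * (n * t ^ 2 - n * (ε + 2) * t + (n + ε)) / n := by
      field_simp; ring
    rw [← sub_nonneg, this]
    exact div_nonneg (by linarith) hn'.le
  have := Real.neg_sqrt_le_of_sq_le hsq
  unfold minEigenvalueBound
  linarith

theorem minEigenvalueBound_le_of_sum_le {ι : Type*} [Fintype ι] (μ : ι → ℝ) (hμ : ∀ i, 0 < μ i)
    {ε : ℝ} (hsum : ∑ i, μ i ≤ Fintype.card ι + ε) (hsum_inv : ∑ i, (μ i)⁻¹ ≤ Fintype.card ι)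
    (i : ι) : minEigenvalueBound (Fintype.card ι) ε ≤ μ i := by
  classical
  set n := Fintype.card ι
  have hn : 0 < n := Fintype.card_pos_iff.2 ⟨i⟩
  have hcs : ((n : ℝ) - 1) ^ 2 ≤ (∑ j ∈ univ.erase i, μ j) * ∑ j ∈ univ.erase i, (μ j)⁻¹ := by
    have := sum_sq_le_sum_mul_sum_of_sq_le_mul (univ.erase i) (r := fun _ => (1 : ℝ))
      (fun j _ => (hμ j).le) (fun j _ => (inv_pos.2 (hμ j)).le)
      (fun j _ => by rw [mul_inv_cancel₀ (hμ j).ne']; norm_num)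
    rwa [sum_const, card_erase_of_mem (mem_univ i), card_univ, nsmul_eq_mul, mul_one,
      Nat.cast_sub hn, Nat.cast_one] at this
  rw [← add_sum_erase _ _ (mem_univ i)] at hsum hsum_inv
  have h1 : 0 ≤ ∑ j ∈ univ.erase i, μ j := sum_nonneg fun j _ => (hμ j).le
  have h2 : 0 ≤ ∑ j ∈ univ.erase i, (μ j)⁻¹ := sum_nonneg fun j _ => (inv_pos.2 (hμ j)).le
  have hcs' : ((n : ℝ) - 1) ^ 2 ≤ (n + ε - μ i) * (n - (μ i)⁻¹) :=
    hcs.trans (mul_le_mul (by linarith) (by linarith) h2 (by linarith))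
  apply minEigenvalueBound_le hn
  have hμi := hμ i
  have : ((n : ℝ) - 1) ^ 2 * μ i ≤ (n + ε - μ i) * (n * μ i - 1) := by
    have hinv : (n - (μ i)⁻¹) * μ i = n * μ i - 1 := by field_simp
    simpa only [mul_assoc, hinv] using mul_le_mul_of_nonneg_right hcs' hμi.le
  nlinarith

namespace Matrix

variable {n : Type*} [Fintype n]

theorem dotProduct_mulVec_mulVec_self {R : Type*} [CommSemiring R] (P M : Matrix n n R)
    (x : n → R) :
    (P *ᵥ x) ⬝ᵥ M *ᵥ (P *ᵥ x) = x ⬝ᵥ (Pᵀ * M * P) *ᵥ x := by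
  rw [← mulVec_mulVec, ← mulVec_mulVec, dotProduct_mulVec x Pᵀ, vecMul_transpose]

variable [DecidableEq n]

theorem det_add_vecMulVec {R : Type*} [CommRing R] {A : Matrix n n R} (hA : IsUnit A.det)
    (u v : n → R) :
    (A + vecMulVec u v).det = A.det * (1 + v ⬝ᵥ A⁻¹ *ᵥ u) := by
  rw [vecMulVec_eq Unit, det_add_replicateCol_mul_replicateRow hA, det_unique (n := Unit),
    add_apply, one_apply_eq, ← replicateRow_vecMul, replicateRow_mul_replicateCol_apply,
    dotProduct_mulVec]

theorem IsHermitian.trace_cfc {A : Matrix n n ℝ} (hA : A.IsHermitian) (f : ℝ → ℝ) :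
    (cfc f A).trace = ∑ i, f (hA.eigenvalues i) := by
  rw [hA.cfc_eq, IsHermitian.cfc, Unitary.conjStarAlgAut_apply, trace_mul_cycle,
    Unitary.coe_star_mul_self, Matrix.one_mul, trace_diagonal]
  rfl

open scoped MatrixOrder in
theorem IsHermitian.mul_dotProduct_self_le {A : Matrix n n ℝ} (hA : A.IsHermitian) {c : ℝ}
    (hc : ∀ i, c ≤ hA.eigenvalues i) (x : n → ℝ) : c * (x ⬝ᵥ x) ≤ x ⬝ᵥ A *ᵥ x := by
  have hle : algebraMap ℝ _ c ≤ A := by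
    rw [algebraMap_le_iff_le_spectrum (ha := hA.isSelfAdjoint),
      hA.spectrum_real_eq_range_eigenvalues]
    rintro _ ⟨i, rfl⟩
    exact hc i
  have := (le_iff.1 hle).dotProduct_mulVec_nonneg x
  rwa [star_trivial, Algebra.algebraMap_eq_smul_one, sub_mulVec, smul_mulVec, one_mulVec,
    dotProduct_sub, dotProduct_smul, smul_eq_mul, sub_nonneg] at this

open scoped MatrixOrder in
theorem PosDef.minEigenvalueBound_mul_le {A B : Matrix n n ℝ} (hA : A.PosDef) (hB : B.PosDef)
    {ε : ℝ} (h₁ : (A⁻¹ * B).trace ≤ Fintype.card n + ε) (h₂ : (B⁻¹ * A).trace ≤ Fintype.card n)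
    (x : n → ℝ) :
    minEigenvalueBound (Fintype.card n) ε * (x ⬝ᵥ B⁻¹ *ᵥ x) ≤ x ⬝ᵥ A⁻¹ *ᵥ x := by
  set R := CFC.sqrt B
  have hR : R.PosDef := (IsStrictlyPositive.sqrt B hB.isStrictlyPositive).posDef
  have hRR : R * R = B := CFC.sqrt_mul_sqrt_self B hB.posSemidef.nonneg
  have hRt : Rᵀ = R := by simpa using hR.1.eq
  have hRu : IsUnit R.det := (isUnit_iff_isUnit_det R).1 hR.isUnit
  set K := R * A⁻¹ * R
  have hK : K.PosDef := by
    have := hA.inv.conjTranspose_mul_mul_same (mulVec_injective_iff_isUnit.2 hR.isUnit)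
    rwa [conjTranspose_eq_transpose_of_trivial, hRt] at this
  have hsum : ∑ i, hK.1.eigenvalues i = (A⁻¹ * B).trace := by
    calc ∑ i, hK.1.eigenvalues i = (cfc id K).trace := (hK.1.trace_cfc id).symm
      _ = (A⁻¹ * B).trace := by rw [cfc_id ℝ K, trace_mul_cycle, hRR, trace_mul_comm]
  have hsum_inv : ∑ i, (hK.1.eigenvalues i)⁻¹ = (B⁻¹ * A).trace := by
    rw [← hK.1.trace_cfc (·⁻¹), cfc_ringInverse_id (R := ℝ) K hK.isUnit,
      ← nonsing_inv_eq_ringInverse, mul_inv_rev, mul_inv_rev, nonsing_inv_nonsing_inv A ((isUnit_iff_isUnit_det A).1 hA.isUnit),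
      ← Matrix.mul_assoc, trace_mul_cycle, ← mul_inv_rev, hRR]
  have hc := minEigenvalueBound_le_of_sum_le _ hK.eigenvalues_pos
    (hsum.trans_le h₁) (hsum_inv.trans_le h₂)
  have hRinvt : (R⁻¹)ᵀ = R⁻¹ := by rw [transpose_nonsing_inv, hRt]
  have hB_inv : (R⁻¹ *ᵥ x) ⬝ᵥ (R⁻¹ *ᵥ x) = x ⬝ᵥ B⁻¹ *ᵥ x := by
    nth_rewrite 2 [← one_mulVec (R⁻¹ *ᵥ x)]
    rw [dotProduct_mulVec_mulVec_self, hRinvt, Matrix.mul_one, ← mul_inv_rev, hRR]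
  have hA_inv : (R⁻¹ *ᵥ x) ⬝ᵥ K *ᵥ (R⁻¹ *ᵥ x) = x ⬝ᵥ A⁻¹ *ᵥ x := by
    rw [dotProduct_mulVec_mulVec_self, hRinvt]
    simp only [K, ← Matrix.mul_assoc, nonsing_inv_mul R hRu, Matrix.one_mul]
    rw [Matrix.mul_assoc, mul_nonsing_inv R hRu, Matrix.mul_one]
  simpa only [hB_inv, hA_inv] using hK.1.mul_dotProduct_self_le hc (R⁻¹ *ᵥ x)

end Matrix

theorem one_add_pow_mul_one_sub_mul_le_one {s : ℝ} (hs : 0 ≤ s) (n : ℕ) :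
    (1 + s) ^ n * (1 - n * s) ≤ 1 := by
  induction n with
  | zero => simp
  | succ n ih =>
    calc (1 + s) ^ (n + 1) * (1 - (n + 1 : ℕ) * s)
        = (1 + s) ^ n * ((1 + s) * (1 - (n + 1) * s)) := by push_cast; ring
      _ ≤ (1 + s) ^ n * (1 - n * s) := by
          gcongr
          nlinarith [sq_nonneg s, mul_nonneg (Nat.cast_nonneg n : (0:ℝ) ≤ n) (sq_nonneg s)]
      _ ≤ 1 := ih

theorem le_of_forall_one_add_mul_le_one_add_pow {d : ℝ} {n : ℕ}
    (h : ∀ s : ℝ, 0 < s → 1 + s * d ≤ (1 + s) ^ n) : d ≤ n := by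
  by_contra! hd
  have hn : (0 : ℝ) ≤ n := Nat.cast_nonneg n
  set s := (d - n) / (2 * (n * d + 1))
  have hden : 0 < 2 * (n * d + 1) := by nlinarith
  have hs : 0 < s := div_pos (by linarith) hden
  have hns : n * s ≤ 1 := by
    rw [mul_div_assoc', div_le_one hden]; nlinarith
  have key := (mul_le_mul_of_nonneg_right (h s hs) (by linarith : 0 ≤ 1 - n * s)).trans
    (one_add_pow_mul_one_sub_mul_le_one hs.le n)
  have hsd : s * (2 * (n * d + 1)) = d - n := div_mul_cancel₀ _ hden.ne'
  nlinarith

section Design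

variable {m : ℕ} {S : Finset (Fin m → ℝ)}

theorem infoM_add (u v : (Fin m → ℝ) → ℝ) : infoM m S (u + v) = infoM m S u + infoM m S v := by
  simp only [infoM, Pi.add_apply, add_smul, sum_add_distrib]

theorem infoM_smul (c : ℝ) (u : (Fin m → ℝ) → ℝ) : infoM m S (c • u) = c • infoM m S u := by
  simp only [infoM, Pi.smul_apply, smul_eq_mul, mul_smul, smul_sum]

open Classical in
theorem infoM_single {x : Fin m → ℝ} (hx : x ∈ S) (c : ℝ) :
    infoM m S (Pi.single x c) = c • vecMulVec x x := by
  rw [infoM, sum_eq_single_of_mem x hx fun y _ hy => by rw [Pi.single_eq_of_ne hy, zero_smul],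
    Pi.single_eq_same]

theorem infoM_posSemidef {u : (Fin m → ℝ) → ℝ} (hu : ∀ x, 0 ≤ u x) : (infoM m S u).PosSemidef :=
  posSemidef_sum S fun x _ => (posSemidef_vecMulVec_self_star x).smul (hu x)

theorem infoM_posDef {u : (Fin m → ℝ) → ℝ} (hu : ∀ x, 0 ≤ u x) (h : IsUnit (infoM m S u).det) :
    (infoM m S u).PosDef :=
  (infoM_posSemidef hu).posDef_iff_det_ne_zero.2 h.ne_zero

theorem trace_inv_mul_infoM (u v : (Fin m → ℝ) → ℝ) :
    ((infoM m S u)⁻¹ * infoM m S v).trace = ∑ x ∈ S, v x * dvar m S u x := by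
  simp only [infoM, mul_sum, trace_sum, Matrix.mul_smul, trace_smul, mul_vecMulVec,
    trace_vecMulVec, smul_eq_mul, dvar, dotProduct_comm]

theorem sum_mul_dvar_self {u : (Fin m → ℝ) → ℝ} (hu : IsUnit (infoM m S u).det) :
    ∑ x ∈ S, u x * dvar m S u x = m := by
  rw [← trace_inv_mul_infoM, nonsing_inv_mul _ hu, trace_one, Fintype.card_fin]

theorem IsDesign.sum_mul_le {v : (Fin m → ℝ) → ℝ} (hv : IsDesign m S v) {f : (Fin m → ℝ) → ℝ}
    {c : ℝ} (hf : ∀ x ∈ S, f x ≤ c) : ∑ x ∈ S, v x * f x ≤ c :=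
  calc ∑ x ∈ S, v x * f x ≤ ∑ x ∈ S, v x * c := sum_le_sum fun x hx =>
        mul_le_mul_of_nonneg_left (hf x hx) (hv.1 x)
    _ = c := by rw [← sum_mul, hv.2, one_mul]

open Classical in
theorem IsDesign.mix_single {v : (Fin m → ℝ) → ℝ} (hv : IsDesign m S v) {x : Fin m → ℝ}
    (hx : x ∈ S) {s : ℝ} (hs : 0 ≤ s) :
    IsDesign m S ((1 + s)⁻¹ • (v + Pi.single x s)) := by
  refine ⟨fun y => ?_, ?_⟩
  · have : 0 ≤ (Pi.single x s : (Fin m → ℝ) → ℝ) y := by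
      rcases eq_or_ne y x with rfl | hy
      · rwa [Pi.single_eq_same]
      · rw [Pi.single_eq_of_ne hy]
    simp only [Pi.smul_apply, Pi.add_apply, smul_eq_mul]
    exact mul_nonneg (by positivity) (add_nonneg (hv.1 y) this)
  · simp only [Pi.smul_apply, Pi.add_apply, smul_eq_mul, ← mul_sum, sum_add_distrib, hv.2,
      sum_pi_single' x s, if_pos hx]
    field_simp

open Classical in
theorem det_infoM_mix_single {v : (Fin m → ℝ) → ℝ} (hv : IsUnit (infoM m S v).det)
    {x : Fin m → ℝ} (hx : x ∈ S) (s : ℝ) :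
    (infoM m S ((1 + s)⁻¹ • (v + Pi.single x s))).det
      = ((1 + s) ^ m)⁻¹ * (infoM m S v).det * (1 + s * dvar m S v x) := by
  rw [infoM_smul, infoM_add, infoM_single hx, ← smul_vecMulVec, det_smul, det_add_vecMulVec hv,
    mulVec_smul, dotProduct_smul, smul_eq_mul, Fintype.card_fin, inv_pow, mul_assoc]
  rfl

theorem IsDOptimal.dvar_le {w : (Fin m → ℝ) → ℝ} (hopt : IsDOptimal m S w)
    (hw : IsUnit (infoM m S w).det) {x : Fin m → ℝ} (hx : x ∈ S) : dvar m S w x ≤ m := by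
  classical
  have hdet : 0 < (infoM m S w).det := (infoM_posDef hopt.1.1 hw).det_pos
  refine le_of_forall_one_add_mul_le_one_add_pow fun s hs => ?_
  have := hopt.2 _ (hopt.1.mix_single hx hs.le)
  rw [det_infoM_mix_single hw hx, mul_comm _ (infoM m S w).det, mul_assoc] at this
  have hle : ((1 + s) ^ m)⁻¹ * (1 + s * dvar m S w x) ≤ 1 :=
    (mul_le_iff_le_one_right hdet).1 this
  rwa [inv_mul_le_iff₀ (by positivity), mul_one] at hle

theorem IsDOptimal.dvar_eq_of_pos {w : (Fin m → ℝ) → ℝ} (hopt : IsDOptimal m S w)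
    (hw : IsUnit (infoM m S w).det) {x : Fin m → ℝ} (hx : x ∈ S) (hpos : 0 < w x) :
    dvar m S w x = m := by
  have hnonneg : ∀ y ∈ S, 0 ≤ w y * (m - dvar m S w y) := fun y hy =>
    mul_nonneg (hopt.1.1 y) (sub_nonneg.2 (hopt.dvar_le hw hy))
  have hzero : ∑ y ∈ S, w y * (m - dvar m S w y) = 0 := by
    simp only [mul_sub, sum_sub_distrib, ← sum_mul, hopt.1.2, sum_mul_dvar_self hw]
    ring
  have := (sum_eq_zero_iff_of_nonneg hnonneg).1 hzero x hx
  linarith [(mul_eq_zero.1 this).resolve_left hpos.ne']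

theorem IsDOptimal.isUnit_det {w v : (Fin m → ℝ) → ℝ} (hopt : IsDOptimal m S w)
    (hv : IsDesign m S v) (hdet : IsUnit (infoM m S v).det) : IsUnit (infoM m S w).det :=
  (((infoM_posDef hv.1 hdet).det_pos).trans_le (hopt.2 v hv)).ne'.isUnit

end Design

theorem support_point_lower_bound_general
    (m : ℕ) (S : Finset (Fin m → ℝ)) (hS : S.Nonempty)
    (w wstar : (Fin m → ℝ) → ℝ)
    (hw : IsDesign m S w) (hM : IsUnit (infoM m S w).det)
    (hopt : IsDOptimal m S wstar)
    (xstar : Fin m → ℝ) (hx : xstar ∈ S) (hsupp : 0 < wstar xstar)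
    (ε : ℝ) (hε : ε = S.sup' hS (fun x => dvar m S w x) - m) :
    m * (1 + ε / 2 - Real.sqrt (ε * (4 + ε - 4 / m)) / 2) ≤ dvar m S w xstar := by
  have hMstar := hopt.isUnit_det hw hM
  have hsup : ∀ x ∈ S, dvar m S w x ≤ m + ε := fun x hx => by
    rw [hε, add_sub_cancel]
    exact le_sup' (fun x => dvar m S w x) hx
  have htrace : ((infoM m S w)⁻¹ * infoM m S wstar).trace ≤ Fintype.card (Fin m) + ε := by
    rw [trace_inv_mul_infoM, Fintype.card_fin]
    exact hopt.1.sum_mul_le hsup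
  have htrace_inv : ((infoM m S wstar)⁻¹ * infoM m S w).trace ≤ Fintype.card (Fin m) := by
    rw [trace_inv_mul_infoM, Fintype.card_fin]
    exact hw.sum_mul_le fun x hx => hopt.dvar_le hMstar hx
  have := (infoM_posDef hw.1 hM).minEigenvalueBound_mul_le (infoM_posDef hopt.1.1 hMstar)
    htrace htrace_inv xstar
  rwa [Fintype.card_fin, ← dvar, ← dvar, hopt.dvar_eq_of_pos hMstar hx hsupp, mul_comm] at this

/-- Any support point x* of a D-optimum design satisfies
d(ξ,x*) ≥ h_m(ε) = m[1 + ε/2 − √(ε(4+ε−4/m))/2], where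
ε = max_{x∈X} d(ξ,x) − m. -/
theorem support_point_lower_bound
    (m : ℕ) (S : Finset (Fin m → ℝ)) (hS : S.Nonempty)
    (w wstar : (Fin m → ℝ) → ℝ)
    (hw : IsDesign m S w) (hM : IsUnit (infoM m S w).det)
    (hopt : IsDOptimal m S wstar) (hMstar : IsUnit (infoM m S wstar).det)
    (xstar : Fin m → ℝ) (hx : xstar ∈ S) (hsupp : 0 < wstar xstar)
    (ε : ℝ) (hε : ε = S.sup' hS (fun x => dvar m S w x) - m) :
    m * (1 + ε / 2 - Real.sqrt (ε * (4 + ε - 4 / m)) / 2) ≤ dvar m S w xstar :=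
  support_point_lower_bound_general m S hS w wstar hw hM hopt xstar hx hsupp ε hε
end

section
/- For every integer m ≥ 1, the function ε ↦ h_m(ε) = m[1 + ε/2 − √(ε(4 + ε − 4/m))/2] is nonincreasing on [0,∞). -/
/-- ε ↦ h_m(ε) is nonincreasing on [0,∞). -/
theorem h_antitone (m : ℕ) (hm : 1 ≤ m) :
    AntitoneOn (fun ε : ℝ => m * (1 + ε / 2 - Real.sqrt (ε * (4 + ε - 4 / m)) / 2))
      (Set.Ici 0) := by
  intro a ha b hb hab
  simp only [Set.mem_Ici] at ha hb
  have hm' : (1:ℝ) ≤ (m:ℝ) := by exact_mod_cast hm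
  have hm0 : (0:ℝ) < (m:ℝ) := by linarith
  set c : ℝ := 4 / (m:ℝ) with hcdef
  have hc0 : 0 ≤ c := by positivity
  have hc4 : c ≤ 4 := by
    rw [hcdef, div_le_iff₀ hm0]; nlinarith
  have hA : 0 ≤ a * (4 + a - c) := by nlinarith
  have hB : 0 ≤ b * (4 + b - c) := by nlinarith
  have hsA0 : 0 ≤ Real.sqrt (a * (4 + a - c)) := Real.sqrt_nonneg _
  have hsAsq : (Real.sqrt (a * (4 + a - c)))^2 = a * (4 + a - c) := Real.sq_sqrt hA
  have hsA : Real.sqrt (a * (4 + a - c)) ≤ a + (4 - c)/2 := by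
    rw [show a + (4 - c)/2 = Real.sqrt ((a + (4 - c)/2)^2) from
      (Real.sqrt_sq (by linarith)).symm]
    apply Real.sqrt_le_sqrt
    nlinarith
  have key : Real.sqrt (a * (4 + a - c)) + (b - a) ≤ Real.sqrt (b * (4 + b - c)) := by
    rw [show Real.sqrt (b * (4 + b - c)) = Real.sqrt ((Real.sqrt (b * (4 + b - c)))^2) from
      (Real.sqrt_sq (Real.sqrt_nonneg _)).symm]
    have h1 : (Real.sqrt (a * (4 + a - c)) + (b - a))^2 ≤ b * (4 + b - c) := by
      nlinarith [mul_le_mul_of_nonneg_left hsA (sub_nonneg.2 hab)]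
    calc Real.sqrt (a * (4 + a - c)) + (b - a)
        ≤ Real.sqrt ((Real.sqrt (a * (4 + a - c)) + (b - a))^2) := by
          rw [Real.sqrt_sq (by linarith)]
      _ ≤ Real.sqrt ((Real.sqrt (b * (4 + b - c)))^2) := by
          apply Real.sqrt_le_sqrt
          rw [Real.sq_sqrt hB]; exact h1
  have : 1 + b / 2 - Real.sqrt (b * (4 + b - c)) / 2
      ≤ 1 + a / 2 - Real.sqrt (a * (4 + a - c)) / 2 := by linarith
  exact mul_le_mul_of_nonneg_left this (le_of_lt hm0)
end

section
/- Let ξ and ξ* be designs on X with nonsingular information matrices, ξ* D-optimum, and suppose max_{x∈X} d(ξ,x) − m = ε < δ. Then log det M(ξ*) − log det M(ξ) < δ. -/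
open Matrix BigOperators Finset

/-!
With `A = M(ξ)`, `B = M(ξ*)` and `C = A^{-1/2} B A^{-1/2}` (positive definite, eigenvalues `λᵢ`),
`log det B - log det A = ∑ log λᵢ ≤ ∑ (λᵢ - 1) = tr (A⁻¹ B) - m`: this is the tangent-line bound
for the concave function `log det`. Since `M(ξ*) = ∑ ξ*(x) x xᵀ`, the trace `tr (A⁻¹ B)` is the
`ξ*`-average of `d(ξ, x)`, hence at most `max_x d(ξ, x) = m + ε`.
-/

namespace Matrix

variable {n : Type*} [Fintype n] [DecidableEq n]

lemma PosDef.log_det_le_trace_sub_card {C : Matrix n n ℝ} (hC : C.PosDef) :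
    Real.log C.det ≤ C.trace - Fintype.card n := by
  have hdet : C.det = ∏ i, hC.1.eigenvalues i := by
    simpa using hC.1.det_eq_prod_eigenvalues
  have htrace : C.trace = ∑ i, hC.1.eigenvalues i := by
    simpa using hC.1.trace_eq_sum_eigenvalues
  rw [hdet, htrace, Real.log_prod fun i _ => (hC.eigenvalues_pos i).ne', ← Finset.card_univ,
    ← nsmul_one, ← Finset.sum_const, ← Finset.sum_sub_distrib]
  exact Finset.sum_le_sum fun i _ => Real.log_le_sub_one_of_pos (hC.eigenvalues_pos i)

open scoped MatrixOrder in
lemma log_det_sub_log_det_le_trace_inv_mul {A B : Matrix n n ℝ} (hA : A.PosDef)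
    (hB : B.PosDef) :
    Real.log B.det - Real.log A.det ≤ (A⁻¹ * B).trace - Fintype.card n := by
  set S := CFC.sqrt A⁻¹
  have hS : S.PosSemidef := (CFC.sqrt_nonneg A⁻¹).posSemidef
  have hSS : S * S = A⁻¹ := CFC.sqrt_mul_sqrt_self A⁻¹ hA.inv.posSemidef.nonneg
  have hdet : (S * B * S).det = A.det⁻¹ * B.det := by
    rw [det_mul, det_mul, mul_right_comm, ← det_mul, hSS, det_nonsing_inv,
      Ring.inverse_eq_inv']
  have hC : (S * B * S).PosDef := by
    refine (hS.1.eq ▸ hB.posSemidef.conjTranspose_mul_mul_same S).posDef_iff_det_ne_zero.mpr ?_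
    rw [hdet]
    exact mul_ne_zero (inv_ne_zero hA.det_pos.ne') hB.det_pos.ne'
  have htrace : (S * B * S).trace = (A⁻¹ * B).trace := by
    rw [trace_mul_cycle, hSS]
  calc Real.log B.det - Real.log A.det = Real.log (S * B * S).det := by
        rw [hdet, Real.log_mul (inv_ne_zero hA.det_pos.ne') hB.det_pos.ne', Real.log_inv]
        ring
    _ ≤ (A⁻¹ * B).trace - Fintype.card n := htrace ▸ hC.log_det_le_trace_sub_card

end Matrix

lemma Finset.sum_mul_le_sup' {ι : Type*} {s : Finset ι} (hs : s.Nonempty) {v f : ι → ℝ}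
    (hv : ∀ i ∈ s, 0 ≤ v i) (hv_sum : ∑ i ∈ s, v i = 1) :
    ∑ i ∈ s, v i * f i ≤ s.sup' hs f :=
  calc ∑ i ∈ s, v i * f i ≤ ∑ i ∈ s, v i * s.sup' hs f :=
        Finset.sum_le_sum fun i hi => mul_le_mul_of_nonneg_left (s.le_sup' f hi) (hv i hi)
    _ = s.sup' hs f := by rw [← Finset.sum_mul, hv_sum, one_mul]

lemma posSemidef_infoM {m : ℕ} {S : Finset (Fin m → ℝ)} {w : (Fin m → ℝ) → ℝ}
    (hw : ∀ x ∈ S, 0 ≤ w x) : (infoM m S w).PosSemidef :=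
  posSemidef_sum S fun x hx => (posSemidef_vecMulVec_self_star x).smul (hw x hx)

lemma trace_mul_infoM {m : ℕ} (P : Matrix (Fin m) (Fin m) ℝ) (S : Finset (Fin m → ℝ))
    (v : (Fin m → ℝ) → ℝ) :
    (P * infoM m S v).trace = ∑ x ∈ S, v x * (x ⬝ᵥ P *ᵥ x) := by
  simp only [infoM, Matrix.mul_sum, trace_sum, Matrix.mul_smul, trace_smul, smul_eq_mul,
    mul_vecMulVec, trace_vecMulVec, dotProduct_comm (P *ᵥ _)]

theorem logdet_gap_lt_general
    (m : ℕ) (S : Finset (Fin m → ℝ)) (hS : S.Nonempty)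
    (w wstar : (Fin m → ℝ) → ℝ)
    (hw : IsDesign m S w) (hopt : IsDOptimal m S wstar)
    (hM : IsUnit (infoM m S w).det)
    (ε δ : ℝ)
    (hε : ε = S.sup' hS (fun x => dvar m S w x) - m) (hεδ : ε < δ) :
    Real.log (infoM m S wstar).det - Real.log (infoM m S w).det < δ := by
  have hA : (infoM m S w).PosDef :=
    (posSemidef_infoM fun x _ => hw.1 x).posDef_iff_det_ne_zero.mpr hM.ne_zero
  have hB : (infoM m S wstar).PosDef :=
    (posSemidef_infoM fun x _ => hopt.1.1 x).posDef_iff_det_ne_zero.mpr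
      (hA.det_pos.trans_le (hopt.2 w hw)).ne'
  calc Real.log (infoM m S wstar).det - Real.log (infoM m S w).det
      ≤ ((infoM m S w)⁻¹ * infoM m S wstar).trace - m := by
        simpa using log_det_sub_log_det_le_trace_inv_mul hA hB
    _ = ∑ x ∈ S, wstar x * dvar m S w x - m := by rw [trace_mul_infoM]; rfl
    _ ≤ ε := by
        rw [hε]
        gcongr
        exact S.sum_mul_le_sup' hS (fun x _ => hopt.1.1 x) hopt.1.2
    _ < δ := hεδ

/-- If max_x d(ξ,x) − m = ε < δ then log det M(ξ*) − log det M(ξ) < δ for a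
D-optimum ξ*. -/
theorem logdet_gap_lt
    (m : ℕ) (S : Finset (Fin m → ℝ)) (hS : S.Nonempty)
    (w wstar : (Fin m → ℝ) → ℝ)
    (hw : IsDesign m S w) (hopt : IsDOptimal m S wstar)
    (hM : IsUnit (infoM m S w).det) (hMstar : IsUnit (infoM m S wstar).det)
    (ε δ : ℝ)
    (hε : ε = S.sup' hS (fun x => dvar m S w x) - m) (hεδ : ε < δ) :
    Real.log (infoM m S wstar).det - Real.log (infoM m S w).det < δ :=
  logdet_gap_lt_general m S hS w wstar hw hopt hM ε δ hε hεδ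
end
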